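/- arXiv:2208.13860 — 5 statements merged into one kernel-verified Lean document; each statement's English description precedes it below -/
import Mathlib

section
/- Let φ₁ ∈ ℂ^N with all entries nonzero and suppose there exist δ̄ ∈ [0, π/2) and γ̄ ∈ (0,1) such that |arg φ₁ₖ − arg φ₁ₗ| ≤ δ̄ and | |φ₁ₖ|/|φ₁ₗ| − 1 | ≤ γ̄ for all k,l. Then (1/(N Σ_k |φ₁ₖ|²)) · [Σ_k |φ₁ₖ|² + 2 Σ_{k>l} |φ₁ₖ||φ₁ₗ| cos(arg φ₁ₖ − arg φ₁ₗ)] ≥ (min_k |φ₁ₖ|² / max_k |φ₁ₖ|²) · (1 + cos δ̄)/2 ≥ (1 − γ̄)² (1 + cos δ̄)/2. -/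
/-!
Write `a k = ‖φ₁ k‖` and `θ k = arg (φ₁ k)`. The numerator is the full double sum
`∑ k l, a k a l cos (θ k - θ l) = |∑ k, a k e^{i(θ k - c)}|²` for any rotation `c`, hence at least
`(∑ k, a k cos (θ k - c))²`. Taking `c` to be the midpoint of the range of the phases puts every
`θ k - c` within `δ̄/2` of `0`, so the numerator is at least `cos² (δ̄/2) (∑ k, a k)²`, and
`cos² (δ̄/2) = (1 + cos δ̄)/2`. Finally `(∑ k, a k)² ≥ N² min a²` and `N ∑ k, a k² ≤ N² max a²`.
The second inequality holds because `min a² / max a²` is `(a k / a l)²` for two entries.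
-/

open Finset Real

theorem sum_sum_eq_sum_add_two_mul_sum_sum_lt_of_symm {ι R : Type*} [Fintype ι] [LinearOrder ι]
    [NonAssocSemiring R] (f : ι → ι → R) (hf : ∀ k l, f k l = f l k) :
    ∑ k, ∑ l, f k l = ∑ k, f k k + 2 * ∑ k, ∑ l with l < k, f k l := by
  have hsplit : ∀ k, ∑ l, f k l = ∑ l with l < k, f k l + (f k k + ∑ l with k < l, f k l) := by
    intro k
    have hge : univ.filter (¬ · < k) = insert k (univ.filter (k < ·)) := by
      ext; simp [le_iff_eq_or_lt, eq_comm]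
    rw [← sum_filter_add_sum_filter_not univ (· < k), hge, sum_insert (by simp)]
  have hupper : ∑ k, ∑ l with k < l, f k l = ∑ k, ∑ l with l < k, f k l := by
    rw [sum_comm' (t' := univ) (s' := fun l => {k | k < l})]
    · simp_rw [hf]
    · simp
  rw [sum_congr rfl fun k _ => hsplit k, sum_add_distrib, sum_add_distrib, hupper, two_mul]
  abel

theorem sum_sum_mul_cos_sub_eq {ι : Type*} (s : Finset ι) (a θ : ι → ℝ) (c : ℝ) :
    ∑ k ∈ s, ∑ l ∈ s, a k * a l * cos (θ k - θ l) =
      (∑ k ∈ s, a k * cos (θ k - c)) ^ 2 + (∑ k ∈ s, a k * sin (θ k - c)) ^ 2 := by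
  simp_rw [sq, sum_mul_sum, ← sum_add_distrib]
  refine sum_congr rfl fun k _ => sum_congr rfl fun l _ => ?_
  rw [show θ k - θ l = (θ k - c) - (θ l - c) by ring, cos_sub]
  ring

theorem exists_forall_abs_sub_le_half {ι : Type*} (s : Finset ι) (θ : ι → ℝ) {δ : ℝ}
    (h : ∀ k ∈ s, ∀ l ∈ s, |θ k - θ l| ≤ δ) : ∃ c, ∀ k ∈ s, |θ k - c| ≤ δ / 2 := by
  rcases s.eq_empty_or_nonempty with rfl | hs
  · exact ⟨0, by simp⟩
  obtain ⟨kmax, hkmax, hmax⟩ := exists_mem_eq_sup' hs θ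
  obtain ⟨kmin, hkmin, hmin⟩ := exists_mem_eq_inf' hs θ
  have hwidth := (le_abs_self _).trans (h kmax hkmax kmin hkmin)
  refine ⟨(s.inf' hs θ + s.sup' hs θ) / 2, fun k hk => abs_le.mpr ⟨?_, ?_⟩⟩
  · linarith [inf'_le θ hk]
  · linarith [le_sup' θ hk]

theorem cos_mul_sum_le_sum_mul_cos_sub {ι : Type*} (s : Finset ι) {a θ : ι → ℝ}
    (ha : ∀ k ∈ s, 0 ≤ a k) {c r : ℝ} (hr : r ≤ π) (hθ : ∀ k ∈ s, |θ k - c| ≤ r) :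
    cos r * ∑ k ∈ s, a k ≤ ∑ k ∈ s, a k * cos (θ k - c) := by
  rw [mul_sum]
  refine sum_le_sum fun k hk => ?_
  rw [mul_comm, ← cos_abs (θ k - c)]
  exact mul_le_mul_of_nonneg_left (cos_le_cos_of_nonneg_of_le_pi (abs_nonneg _) hr (hθ k hk))
    (ha k hk)

theorem card_sq_mul_le_sq_sum {ι : Type*} (s : Finset ι) {a : ι → ℝ} {m : ℝ} (hm : 0 ≤ m)
    (ha : ∀ k ∈ s, 0 ≤ a k) (hma : ∀ k ∈ s, m ≤ a k ^ 2) :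
    (#s : ℝ) ^ 2 * m ≤ (∑ k ∈ s, a k) ^ 2 := by
  have hsqrt : #s • √m ≤ ∑ k ∈ s, a k :=
    card_nsmul_le_sum s a _ fun k hk => sqrt_le_iff.mpr ⟨ha k hk, hma k hk⟩
  rw [nsmul_eq_mul] at hsqrt
  calc (#s : ℝ) ^ 2 * m = (#s * √m) ^ 2 := by rw [mul_pow, sq_sqrt hm]
    _ ≤ (∑ k ∈ s, a k) ^ 2 := by gcongr

theorem inf'_div_sup'_le_sq_sum_div {ι : Type*} (s : Finset ι) (hs : s.Nonempty) {a : ι → ℝ}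
    (ha : ∀ k ∈ s, 0 ≤ a k) :
    s.inf' hs (fun k => a k ^ 2) / s.sup' hs (fun k => a k ^ 2) ≤
      (∑ k ∈ s, a k) ^ 2 / (#s * ∑ k ∈ s, a k ^ 2) := by
  set m := s.inf' hs (fun k => a k ^ 2)
  set M := s.sup' hs (fun k => a k ^ 2)
  have hm : 0 ≤ m := (le_inf'_iff hs _).mpr fun k _ => sq_nonneg (a k)
  have hsum : ∑ k ∈ s, a k ^ 2 ≤ #s * M := by
    simpa using sum_le_card_nsmul s _ M fun k hk => le_sup' (fun k => a k ^ 2) hk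
  rcases (sum_nonneg fun k _ => sq_nonneg (a k) : 0 ≤ ∑ k ∈ s, a k ^ 2).eq_or_lt with h0 | hpos
  · obtain ⟨k, hk⟩ := hs
    have hak : a k ^ 2 = 0 :=
      (sum_eq_zero_iff_of_nonneg fun k _ => sq_nonneg (a k)).mp h0.symm k hk
    have hm0 : m = 0 := le_antisymm (hak ▸ inf'_le _ hk) hm
    rw [hm0, zero_div]
    positivity
  · have hcard : (0 : ℝ) < #s := by exact_mod_cast hs.card_pos
    calc m / M = (#s : ℝ) ^ 2 * m / (#s ^ 2 * M) := by
          rw [mul_div_mul_left _ _ (by positivity)]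
      _ ≤ (∑ k ∈ s, a k) ^ 2 / (#s * ∑ k ∈ s, a k ^ 2) := by
          refine div_le_div₀ (sq_nonneg _) (card_sq_mul_le_sq_sum s hm ha fun k hk => inf'_le _ hk)
            (by positivity) ?_
          rw [sq, mul_assoc]
          exact mul_le_mul_of_nonneg_left hsum hcard.le

theorem cos_half_sq_mul_sq_sum_le {ι : Type*} [Fintype ι] [LinearOrder ι] {a θ : ι → ℝ}
    (ha : ∀ k, 0 ≤ a k) {δ : ℝ} (hδ0 : 0 ≤ δ) (hδπ : δ ≤ π) (hθ : ∀ k l, |θ k - θ l| ≤ δ) :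
    cos (δ / 2) ^ 2 * (∑ k, a k) ^ 2 ≤
      ∑ k, a k ^ 2 + 2 * ∑ k, ∑ l with l < k, a k * a l * cos (θ k - θ l) := by
  obtain ⟨c, hc⟩ := exists_forall_abs_sub_le_half univ θ fun k _ l _ => hθ k l
  have hcos : 0 ≤ cos (δ / 2) := cos_nonneg_of_mem_Icc ⟨by linarith [pi_pos], by linarith⟩
  have hsymm : ∀ k l, a k * a l * cos (θ k - θ l) = a l * a k * cos (θ l - θ k) := by
    intro k l
    rw [← cos_neg, neg_sub]
    ring
  have hdiag : ∀ k, a k * a k * cos (θ k - θ k) = a k ^ 2 := by simp [sq]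
  calc cos (δ / 2) ^ 2 * (∑ k, a k) ^ 2 = (cos (δ / 2) * ∑ k, a k) ^ 2 := by ring
    _ ≤ (∑ k, a k * cos (θ k - c)) ^ 2 :=
      pow_le_pow_left₀ (mul_nonneg hcos (sum_nonneg fun k _ => ha k))
        (cos_mul_sum_le_sum_mul_cos_sub univ (fun k _ => ha k) (by linarith) hc) 2
    _ ≤ (∑ k, a k * cos (θ k - c)) ^ 2 + (∑ k, a k * sin (θ k - c)) ^ 2 :=
      le_add_of_nonneg_right (sq_nonneg _)
    _ = ∑ k, ∑ l, a k * a l * cos (θ k - θ l) := (sum_sum_mul_cos_sub_eq univ a θ c).symm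
    _ = ∑ k, a k ^ 2 + 2 * ∑ k, ∑ l with l < k, a k * a l * cos (θ k - θ l) := by
      rw [sum_sum_eq_sum_add_two_mul_sum_sum_lt_of_symm _ hsymm]
      simp only [hdiag]

theorem inf'_div_sup'_mul_one_add_cos_div_two_le {ι : Type*} [Fintype ι] [LinearOrder ι]
    (hne : (univ : Finset ι).Nonempty) {a θ : ι → ℝ} (ha : ∀ k, 0 ≤ a k) {δ : ℝ} (hδ0 : 0 ≤ δ)
    (hδπ : δ ≤ π) (hθ : ∀ k l, |θ k - θ l| ≤ δ) :
    univ.inf' hne (fun k => a k ^ 2) / univ.sup' hne (fun k => a k ^ 2) * (1 + cos δ) / 2 ≤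
      (∑ k, a k ^ 2 + 2 * ∑ k, ∑ l with l < k, a k * a l * cos (θ k - θ l)) /
        (Fintype.card ι * ∑ k, a k ^ 2) := by
  have hhalf : (1 + cos δ) / 2 = cos (δ / 2) ^ 2 := by
    rw [cos_sq, mul_div_cancel₀ δ two_ne_zero]
    ring
  calc _ = cos (δ / 2) ^ 2 *
        (univ.inf' hne (fun k => a k ^ 2) / univ.sup' hne (fun k => a k ^ 2)) := by
        rw [mul_div_assoc, hhalf, mul_comm]
    _ ≤ cos (δ / 2) ^ 2 * ((∑ k, a k) ^ 2 / (Fintype.card ι * ∑ k, a k ^ 2)) := by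
        refine mul_le_mul_of_nonneg_left ?_ (sq_nonneg _)
        simpa using inf'_div_sup'_le_sq_sum_div univ hne fun k _ => ha k
    _ ≤ _ := by
        rw [← mul_div_assoc]
        gcongr
        exact cos_half_sq_mul_sq_sum_le ha hδ0 hδπ hθ

theorem one_sub_sq_le_inf'_div_sup' {ι : Type*} (s : Finset ι) (hs : s.Nonempty) {b : ι → ℝ}
    {γ : ℝ} (hγ : γ ≤ 1) (hb : ∀ k ∈ s, ∀ l ∈ s, |b k / b l - 1| ≤ γ) :
    (1 - γ) ^ 2 ≤ s.inf' hs (fun k => b k ^ 2) / s.sup' hs (fun k => b k ^ 2) := by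
  obtain ⟨kmin, hkmin, hmin⟩ := exists_mem_eq_inf' hs fun k => b k ^ 2
  obtain ⟨kmax, hkmax, hmax⟩ := exists_mem_eq_sup' hs fun k => b k ^ 2
  rw [hmin, hmax, ← div_pow]
  exact pow_le_pow_left₀ (by linarith) (by linarith [(abs_le.mp (hb kmin hkmin kmax hkmax)).1]) 2

theorem eigenvector_coherence_lower_bound_general {N : ℕ} (hN : 0 < N)
    (φ₁ : Fin N → ℂ)
    (δb γb : ℝ) (hδ : δb ∈ Set.Ico 0 (Real.pi / 2)) (hγ : γb ∈ Set.Ioo 0 1)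
    (harg : ∀ k l, |Complex.arg (φ₁ k) - Complex.arg (φ₁ l)| ≤ δb)
    (hamp : ∀ k l, |‖φ₁ k‖ / ‖φ₁ l‖ - 1| ≤ γb) :
    ((∑ k, ‖φ₁ k‖ ^ 2) +
        2 * ∑ k, ∑ l ∈ Finset.univ.filter (fun l => l < k),
          ‖φ₁ k‖ * ‖φ₁ l‖ *
            Real.cos (Complex.arg (φ₁ k) - Complex.arg (φ₁ l))) /
      ((N : ℝ) * ∑ k, ‖φ₁ k‖ ^ 2)
      ≥ ((Finset.univ.inf' (Finset.univ_nonempty_iff.mpr ⟨⟨0, hN⟩⟩)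
            fun k => ‖φ₁ k‖ ^ 2) /
          (Finset.univ.sup' (Finset.univ_nonempty_iff.mpr ⟨⟨0, hN⟩⟩)
            fun k => ‖φ₁ k‖ ^ 2)) * (1 + Real.cos δb) / 2 ∧
    ((Finset.univ.inf' (Finset.univ_nonempty_iff.mpr ⟨⟨0, hN⟩⟩)
          fun k => ‖φ₁ k‖ ^ 2) /
        (Finset.univ.sup' (Finset.univ_nonempty_iff.mpr ⟨⟨0, hN⟩⟩)
          fun k => ‖φ₁ k‖ ^ 2)) * (1 + Real.cos δb) / 2
      ≥ (1 - γb) ^ 2 * (1 + Real.cos δb) / 2 := by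
  obtain ⟨hδ0, hδπ⟩ := hδ
  have hne : (univ : Finset (Fin N)).Nonempty := univ_nonempty_iff.mpr ⟨⟨0, hN⟩⟩
  constructor
  · have h := inf'_div_sup'_mul_one_add_cos_div_two_le hne (fun k => norm_nonneg (φ₁ k))
      hδ0 (by linarith [pi_pos]) harg
    rwa [Fintype.card_fin] at h
  · have hratio := one_sub_sq_le_inf'_div_sup' univ hne hγ.2.le fun k _ l _ => hamp k l
    have hcos := neg_one_le_cos δb
    rw [ge_iff_le]
    gcongr
    linarith

/-- Quantitative lower bound on the normalized coherence of an eigenvector whose entries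
have pairwise phase differences at most `δ̄ ∈ [0, π/2)` and amplitude-ratio deviations at
most `γ̄ ∈ (0,1)`: the coherence is at least `(min|φ|²/max|φ|²)(1+cos δ̄)/2 ≥
(1−γ̄)²(1+cos δ̄)/2`. -/
theorem eigenvector_coherence_lower_bound {N : ℕ} (hN : 0 < N)
    (φ₁ : Fin N → ℂ) (hφ : ∀ k, φ₁ k ≠ 0)
    (δb γb : ℝ) (hδ : δb ∈ Set.Ico 0 (Real.pi / 2)) (hγ : γb ∈ Set.Ioo 0 1)
    (harg : ∀ k l, |Complex.arg (φ₁ k) - Complex.arg (φ₁ l)| ≤ δb)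
    (hamp : ∀ k l, |‖φ₁ k‖ / ‖φ₁ l‖ - 1| ≤ γb) :
    ((∑ k, ‖φ₁ k‖ ^ 2) +
        2 * ∑ k, ∑ l ∈ Finset.univ.filter (fun l => l < k),
          ‖φ₁ k‖ * ‖φ₁ l‖ *
            Real.cos (Complex.arg (φ₁ k) - Complex.arg (φ₁ l))) /
      ((N : ℝ) * ∑ k, ‖φ₁ k‖ ^ 2)
      ≥ ((Finset.univ.inf' (Finset.univ_nonempty_iff.mpr ⟨⟨0, hN⟩⟩)
            fun k => ‖φ₁ k‖ ^ 2) /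
          (Finset.univ.sup' (Finset.univ_nonempty_iff.mpr ⟨⟨0, hN⟩⟩)
            fun k => ‖φ₁ k‖ ^ 2)) * (1 + Real.cos δb) / 2 ∧
    ((Finset.univ.inf' (Finset.univ_nonempty_iff.mpr ⟨⟨0, hN⟩⟩)
          fun k => ‖φ₁ k‖ ^ 2) /
        (Finset.univ.sup' (Finset.univ_nonempty_iff.mpr ⟨⟨0, hN⟩⟩)
          fun k => ‖φ₁ k‖ ^ 2)) * (1 + Real.cos δb) / 2
      ≥ (1 - γb) ^ 2 * (1 + Real.cos δb) / 2 :=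
  eigenvector_coherence_lower_bound_general hN φ₁ δb γb hδ hγ harg hamp
end

section
/- Under the setting: A = ϖ₀I + ηe^{jφ}(diag(ς̄*) − Y), P the projector off span(φ₁), M := Re(e^{jφ}Y) a Laplacian with λ₂(M) > 0, and the parametric bound max_k Re(e^{jφ} ς̄*_k) < c·λ₂(M) where c := (1−γ̄)²(1+cos δ̄)/2 and the eigenvector bounds of Condition 2 hold, one has for V(v) = ½ vᴴPv along v̇ = Av: V̇(v) = η vᴴP[Re(e^{jφ}diag(ς̄*)) − M]Pv ≤ η‖Pv‖²(max_k Re(e^{jφ}ς̄*_k) − c λ₂(M)) < 0 for all v ∉ span(φ₁). -/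
/-
Since `ϖ₀` is purely imaginary and `Y` is symmetric, the Hermitian part of `A` is
`η (diag(Re(e^{jφ} ς̄*)) − M)`, and `P` is a Hermitian projector, so `V̇` is this Hermitian form
evaluated at `u = Pv`. Its diagonal part is at most `max_k Re(e^{jφ} ς̄*_k) ‖u‖²`. For the Laplacian
part, `u ⊥ φ₁` and Cauchy–Schwarz against the component of `𝟙` orthogonal to `φ₁` give
`|∑ u|² ≤ (N − |∑ φ₁|²/‖φ₁‖²) ‖u‖²`, while the phase spread `δ̄` and amplitude spread `γ̄` of `φ₁`
give the coherence bound `|∑ φ₁|² ≥ c N ‖φ₁‖²`. Hence removing the mean of `u`, which does not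
change `uᴴMu`, keeps at least the fraction `c` of `‖u‖²`, and the Rayleigh quotient bound on
mean-zero vectors yields `uᴴMu ≥ c λ₂ ‖u‖²`.
-/

open Complex
open scoped InnerProductSpace

section InnerProductSpace

variable {𝕜 E : Type*} [RCLike 𝕜] [NormedAddCommGroup E] [InnerProductSpace 𝕜 E]

theorem norm_sq_starProjection_orthogonal_singleton (φ x : E) :
    ‖(𝕜 ∙ φ)ᗮ.starProjection x‖ ^ 2 = ‖x‖ ^ 2 - ‖⟪φ, x⟫_𝕜‖ ^ 2 / ‖φ‖ ^ 2 := by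
  rw [Submodule.norm_sq_eq_add_norm_sq_starProjection x (𝕜 ∙ φ),
    Submodule.starProjection_singleton, norm_smul, mul_pow, norm_div, div_pow,
    RCLike.norm_ofReal, abs_of_nonneg (by positivity)]
  rcases eq_or_ne φ 0 with rfl | hφ
  · simp
  · field_simp
    ring

theorem norm_inner_sq_le_of_inner_eq_zero {φ u : E} (h : ⟪φ, u⟫_𝕜 = 0) (x : E) :
    ‖⟪x, u⟫_𝕜‖ ^ 2 ≤ (‖x‖ ^ 2 - ‖⟪φ, x⟫_𝕜‖ ^ 2 / ‖φ‖ ^ 2) * ‖u‖ ^ 2 := by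
  have hu : u ∈ (𝕜 ∙ φ)ᗮ := Submodule.mem_orthogonal_singleton_iff_inner_right.mpr h
  have hxu : ⟪x, u⟫_𝕜 = ⟪(𝕜 ∙ φ)ᗮ.starProjection x, u⟫_𝕜 := by
    rw [Submodule.inner_starProjection_left_eq_right,
      Submodule.starProjection_eq_self_iff.mpr hu]
  rw [hxu, ← norm_sq_starProjection_orthogonal_singleton, ← mul_pow]
  exact pow_le_pow_left₀ (norm_nonneg _) (norm_inner_le_norm _ _) 2

end InnerProductSpace

section FiniteSums

variable {𝕜 ι : Type*} [RCLike 𝕜] [Fintype ι]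

theorem sum_norm_sq_pos {u : ι → 𝕜} (hu : u ≠ 0) : 0 < ∑ k, ‖u k‖ ^ 2 := by
  obtain ⟨k, hk⟩ := Function.ne_iff.mp hu
  exact Finset.sum_pos' (fun j _ => by positivity)
    ⟨k, Finset.mem_univ k, pow_pos (norm_pos_iff.mpr hk) 2⟩

theorem sum_sub_mean_eq_zero [Nonempty ι] (u : ι → 𝕜) :
    ∑ k, (u k - (∑ j, u j) / Fintype.card ι) = 0 := by
  rw [Finset.sum_sub_distrib, Finset.sum_const, Finset.card_univ, nsmul_eq_mul,
    mul_div_cancel₀ _ (by simp), sub_self]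

theorem sum_norm_sq_sub_mean (u : ι → 𝕜) :
    ∑ k, ‖u k - (∑ j, u j) / Fintype.card ι‖ ^ 2
      = ∑ k, ‖u k‖ ^ 2 - ‖∑ k, u k‖ ^ 2 / Fintype.card ι := by
  have h := norm_sq_starProjection_orthogonal_singleton (𝕜 := 𝕜)
    (WithLp.toLp 2 (fun _ => 1 : ι → 𝕜)) (WithLp.toLp 2 u)
  simp only [Submodule.starProjection_orthogonal_val, Submodule.starProjection_singleton,
    EuclideanSpace.norm_sq_eq, EuclideanSpace.inner_toLp_toLp] at h
  simpa [dotProduct] using h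

theorem norm_sum_sq_le_of_star_dotProduct_eq_zero {φ u : ι → 𝕜} (h : star φ ⬝ᵥ u = 0) :
    ‖∑ k, u k‖ ^ 2 ≤
      (Fintype.card ι - ‖∑ k, φ k‖ ^ 2 / ∑ k, ‖φ k‖ ^ 2) * ∑ k, ‖u k‖ ^ 2 := by
  have h' : ⟪WithLp.toLp 2 φ, WithLp.toLp 2 u⟫_𝕜 = 0 := by
    rwa [EuclideanSpace.inner_toLp_toLp, dotProduct_comm]
  have := norm_inner_sq_le_of_inner_eq_zero h' (WithLp.toLp 2 (fun _ => 1 : ι → 𝕜))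
  simpa [EuclideanSpace.norm_sq_eq, EuclideanSpace.inner_toLp_toLp, dotProduct, ← map_sum,
    RCLike.norm_conj] using this

theorem norm_sum_sq_le_of_star_dotProduct_eq_zero_of_coherent {φ u : ι → 𝕜} (hφ : φ ≠ 0)
    (h : star φ ⬝ᵥ u = 0) {c : ℝ}
    (hc : c * Fintype.card ι * ∑ k, ‖φ k‖ ^ 2 ≤ ‖∑ k, φ k‖ ^ 2) :
    ‖∑ k, u k‖ ^ 2 ≤ (1 - c) * Fintype.card ι * ∑ k, ‖u k‖ ^ 2 := by
  have hcN : c * Fintype.card ι ≤ ‖∑ k, φ k‖ ^ 2 / ∑ k, ‖φ k‖ ^ 2 :=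
    (le_div_iff₀ (sum_norm_sq_pos hφ)).mpr hc
  refine (norm_sum_sq_le_of_star_dotProduct_eq_zero h).trans ?_
  gcongr
  linarith

end FiniteSums

namespace Matrix

section Projection

variable {𝕜 n : Type*} [RCLike 𝕜] [Fintype n] [DecidableEq n]

/-- The paper's `P`, the orthogonal projector onto `φᗮ`; it is `1` for `φ = 0`, as `0⁻¹ = 0`. -/
def projOff (φ : n → 𝕜) : Matrix n n 𝕜 :=
  1 - (star φ ⬝ᵥ φ)⁻¹ • vecMulVec φ (star φ)

theorem isHermitian_projOff (φ : n → 𝕜) : (projOff φ).IsHermitian := by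
  simp only [projOff, IsHermitian, conjTranspose_sub, conjTranspose_one, conjTranspose_smul,
    conjTranspose_vecMulVec, star_star, star_inv₀, ← star_dotProduct]

open scoped ComplexOrder in
theorem star_vecMul_projOff (φ : n → 𝕜) : star φ ᵥ* projOff φ = 0 := by
  rcases eq_or_ne φ 0 with rfl | hφ
  · simp
  · have hβ : star φ ⬝ᵥ φ ≠ 0 := dotProduct_star_self_eq_zero.not.mpr hφ
    rw [projOff, vecMul_sub, vecMul_one, vecMul_smul, vecMul_vecMulVec, smul_smul,
      inv_mul_cancel₀ hβ, one_smul, sub_self]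

end Projection

section QuadraticForms

variable {n : Type*} [Fintype n]

theorem IsHermitian.star_dotProduct_mul_mul_mulVec {α : Type*} [CommSemiring α] [StarRing α]
    {P : Matrix n n α} (hP : P.IsHermitian) (X : Matrix n n α) (v : n → α) :
    star v ⬝ᵥ (P * X * P) *ᵥ v = star (P *ᵥ v) ⬝ᵥ X *ᵥ (P *ᵥ v) := by
  rw [← mulVec_mulVec, ← mulVec_mulVec, dotProduct_mulVec, star_mulVec, hP.eq]

theorem star_dotProduct_mulVec_sub_const {R : Type*} [CommRing R] [StarRing R]
    {L : Matrix n n R} (hL : L *ᵥ 1 = 0) (hL' : 1 ᵥ* L = 0) (u : n → R) (a : R) :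
    star (u - fun _ => a) ⬝ᵥ L *ᵥ (u - fun _ => a) = star u ⬝ᵥ L *ᵥ u := by
  have ha : (fun _ => a : n → R) = a • 1 := by ext; simp
  rw [ha, mulVec_sub, mulVec_smul, hL, smul_zero, sub_zero, star_sub, star_smul, star_one,
    sub_dotProduct, smul_dotProduct, dotProduct_mulVec 1, hL', zero_dotProduct, smul_zero,
    sub_zero]

theorem re_star_dotProduct_diagonal_mulVec_le [DecidableEq n] {d : n → ℝ} {m : ℝ}
    (hd : ∀ k, d k ≤ m) (u : n → ℂ) :
    (star u ⬝ᵥ diagonal (fun k => (d k : ℂ)) *ᵥ u).re ≤ m * ∑ k, ‖u k‖ ^ 2 := by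
  have hterm : ∀ k, (star (u k) * (d k * u k)).re = d k * ‖u k‖ ^ 2 := fun k => by
    rw [mul_left_comm, star_def, conj_mul', ← ofReal_pow, re_ofReal_mul, ofReal_re]
  simp only [mulVec_diagonal, dotProduct, Pi.star_apply, re_sum, hterm, Finset.mul_sum]
  gcongr with k
  exact hd k

theorem mulVec_one_map_ofReal_eq_zero {Y : Matrix n n ℂ} (hY1 : Y *ᵥ 1 = 0) (z : ℂ)
    {M : Matrix n n ℝ} (hM : ∀ i j, M i j = (z * Y i j).re) : M.map ofReal *ᵥ 1 = 0 := by
  ext i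
  have hi := congrFun hY1 i
  simp only [mulVec, dotProduct, Pi.one_apply, mul_one, Pi.zero_apply, map_apply] at hi ⊢
  rw [← ofReal_sum, ofReal_eq_zero]
  simp only [hM]
  rw [← re_sum, ← Finset.mul_sum, hi, mul_zero, zero_re]

end QuadraticForms

theorem IsSymm.add_conjTranspose {n : Type*} {B : Matrix n n ℂ} (hB : B.IsSymm) :
    B + Bᴴ = (2 : ℂ) • B.map (fun z => (z.re : ℂ)) := by
  ext i j
  rw [add_apply, conjTranspose_apply, hB.apply i j, smul_apply, map_apply, smul_eq_mul]
  exact_mod_cast add_conj (B i j)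

end Matrix

open Matrix

theorem mul_sum_norm_sq_le_re_star_dotProduct_mulVec {ι : Type*} [Fintype ι] [Nonempty ι]
    {L : Matrix ι ι ℂ} (hLs : L.IsSymm) (hL : L *ᵥ 1 = 0) {lam c : ℝ} (hlam : 0 ≤ lam)
    (hgap : ∀ w : ι → ℂ, ∑ k, w k = 0 → lam * ∑ k, ‖w k‖ ^ 2 ≤ (star w ⬝ᵥ L *ᵥ w).re)
    {u : ι → ℂ} (hu : ‖∑ k, u k‖ ^ 2 ≤ (1 - c) * Fintype.card ι * ∑ k, ‖u k‖ ^ 2) :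
    c * lam * ∑ k, ‖u k‖ ^ 2 ≤ (star u ⬝ᵥ L *ᵥ u).re := by
  set w : ι → ℂ := u - fun _ => (∑ j, u j) / Fintype.card ι
  have hw : c * ∑ k, ‖u k‖ ^ 2 ≤ ∑ k, ‖w k‖ ^ 2 := by
    have hcard : (0 : ℝ) < Fintype.card ι := by exact_mod_cast Fintype.card_pos
    have hmean : ‖∑ k, u k‖ ^ 2 / Fintype.card ι ≤ (1 - c) * ∑ k, ‖u k‖ ^ 2 := by
      rw [div_le_iff₀ hcard]
      linarith
    simp only [w, Pi.sub_apply]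
    rw [sum_norm_sq_sub_mean]
    linarith
  calc c * lam * ∑ k, ‖u k‖ ^ 2 = lam * (c * ∑ k, ‖u k‖ ^ 2) := by ring
    _ ≤ lam * ∑ k, ‖w k‖ ^ 2 := mul_le_mul_of_nonneg_left hw hlam
    _ ≤ (star w ⬝ᵥ L *ᵥ w).re := hgap w (sum_sub_mean_eq_zero u)
    _ = (star u ⬝ᵥ L *ᵥ u).re := by
        have hL' : 1 ᵥ* L = 0 := by rw [← hLs.eq, vecMul_transpose, hL]
        rw [star_dotProduct_mulVec_sub_const hL hL']

section Coherence

theorem exists_abs_sub_le_half {ι : Type*} [Finite ι] [Nonempty ι] {θ : ι → ℝ} {δ : ℝ}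
    (h : ∀ k l, |θ k - θ l| ≤ δ) : ∃ ψ, ∀ k, |θ k - ψ| ≤ δ / 2 := by
  obtain ⟨kmax, hmax⟩ := Finite.exists_max θ
  obtain ⟨kmin, hmin⟩ := Finite.exists_min θ
  have hspread := (abs_le.1 (h kmax kmin)).2
  refine ⟨(θ kmin + θ kmax) / 2, fun k => abs_le.2 ⟨?_, ?_⟩⟩ <;> linarith [hmax k, hmin k]

theorem Complex.re_exp_neg_mul_I_mul (ψ : ℝ) (z : ℂ) :
    (exp (-(ψ * I)) * z).re = ‖z‖ * Real.cos (arg z - ψ) := by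
  conv_lhs => rw [← norm_mul_exp_arg_mul_I z]
  rw [mul_left_comm, ← exp_add, show -(ψ * I) + arg z * I = ((arg z - ψ : ℝ) : ℂ) * I by
    push_cast; ring, re_ofReal_mul, exp_ofReal_mul_I_re]

variable {ι : Type*} [Fintype ι]

theorem cos_mul_sum_norm_le_norm_sum {a : ι → ℂ} {ψ θ : ℝ} (hθ : θ ≤ Real.pi)
    (h : ∀ k, |arg (a k) - ψ| ≤ θ) : Real.cos θ * ∑ k, ‖a k‖ ≤ ‖∑ k, a k‖ :=
  calc Real.cos θ * ∑ k, ‖a k‖ ≤ ∑ k, (exp (-(ψ * I)) * a k).re := by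
        rw [Finset.mul_sum]
        gcongr with k
        rw [re_exp_neg_mul_I_mul, mul_comm, ← Real.cos_abs (arg (a k) - ψ)]
        gcongr
        exact Real.cos_le_cos_of_nonneg_of_le_pi (abs_nonneg _) hθ (h k)
    _ = (exp (-(ψ * I)) * ∑ k, a k).re := by rw [Finset.mul_sum, re_sum]
    _ ≤ ‖exp (-(ψ * I)) * ∑ k, a k‖ := re_le_norm _
    _ = ‖∑ k, a k‖ := by simp [norm_exp]

theorem mul_card_mul_sum_sq_le_sq_sum [Nonempty ι] {a : ι → ℝ} (ha : ∀ k, 0 ≤ a k) {r : ℝ}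
    (hr : 0 ≤ r) (h : ∀ k l, r * a l ≤ a k) :
    r * Fintype.card ι * ∑ k, a k ^ 2 ≤ (∑ k, a k) ^ 2 := by
  obtain ⟨l, hl⟩ := Finite.exists_max a
  have hsq : ∑ k, a k ^ 2 ≤ a l * ∑ k, a k := by
    rw [Finset.mul_sum]
    gcongr with k
    nlinarith [hl k, ha k]
  have hcard : Fintype.card ι * (r * a l) ≤ ∑ k, a k := by
    simpa using Finset.card_nsmul_le_sum Finset.univ a (r * a l) (fun k _ => h k l)
  have hsum : 0 ≤ ∑ k, a k := Finset.sum_nonneg fun k _ => ha k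
  calc r * Fintype.card ι * ∑ k, a k ^ 2 ≤ r * Fintype.card ι * (a l * ∑ k, a k) := by gcongr
    _ = Fintype.card ι * (r * a l) * ∑ k, a k := by ring
    _ ≤ (∑ k, a k) * ∑ k, a k := by gcongr
    _ = (∑ k, a k) ^ 2 := by ring

theorem coherence_mul_card_mul_sum_norm_sq_le_norm_sum_sq [Nonempty ι] {φ : ι → ℂ}
    (hφ : ∀ k, φ k ≠ 0) {δ γ : ℝ} (hδ0 : 0 ≤ δ) (hδπ : δ ≤ Real.pi) (hγ0 : 0 ≤ γ) (hγ1 : γ ≤ 1)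
    (harg : ∀ k l, |arg (φ k) - arg (φ l)| ≤ δ) (hamp : ∀ k l, |‖φ k‖ / ‖φ l‖ - 1| ≤ γ) :
    (1 - γ) ^ 2 * (1 + Real.cos δ) / 2 * Fintype.card ι * ∑ k, ‖φ k‖ ^ 2 ≤ ‖∑ k, φ k‖ ^ 2 := by
  obtain ⟨ψ, hψ⟩ := exists_abs_sub_le_half harg
  have hcos := cos_mul_sum_norm_le_norm_sum (by linarith [Real.pi_pos]) hψ
  have hcos0 : 0 ≤ Real.cos (δ / 2) :=
    Real.cos_nonneg_of_mem_Icc ⟨by linarith [Real.pi_pos], by linarith⟩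
  have hratio : ∀ k l, (1 - γ) * ‖φ l‖ ≤ ‖φ k‖ := fun k l => by
    rw [← le_div_iff₀ (norm_pos_iff.2 (hφ l))]
    linarith [(abs_le.1 (hamp k l)).1]
  have hamp' := mul_card_mul_sum_sq_le_sq_sum (fun k => norm_nonneg (φ k)) (by linarith) hratio
  have hhalf : (1 + Real.cos δ) / 2 = Real.cos (δ / 2) ^ 2 := by
    rw [Real.cos_sq, mul_div_cancel₀ _ two_ne_zero]
    ring
  calc (1 - γ) ^ 2 * (1 + Real.cos δ) / 2 * Fintype.card ι * ∑ k, ‖φ k‖ ^ 2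
      = Real.cos (δ / 2) ^ 2 * (1 - γ) * ((1 - γ) * Fintype.card ι * ∑ k, ‖φ k‖ ^ 2) := by
        rw [mul_div_assoc, hhalf]
        ring
    _ ≤ Real.cos (δ / 2) ^ 2 * 1 * (∑ k, ‖φ k‖) ^ 2 := by gcongr; linarith
    _ = (Real.cos (δ / 2) * ∑ k, ‖φ k‖) ^ 2 := by ring
    _ ≤ ‖∑ k, φ k‖ ^ 2 := by gcongr

end Coherence

section DVOC

variable {n : Type*} [DecidableEq n]

noncomputable def dvocMatrix (ϖ₀ : ℂ) (η φ : ℝ) (ςs : n → ℂ) (Y : Matrix n n ℂ) :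
    Matrix n n ℂ :=
  ϖ₀ • 1 + ((η : ℂ) * exp (I * φ)) • (diagonal ςs - Y)

theorem isSymm_dvocMatrix (ϖ₀ : ℂ) (η φ : ℝ) (ςs : n → ℂ) {Y : Matrix n n ℂ} (hY : Y.IsSymm) :
    (dvocMatrix ϖ₀ η φ ςs Y).IsSymm := by
  simp only [dvocMatrix, IsSymm, transpose_add, transpose_smul, transpose_one, transpose_sub,
    diagonal_transpose, hY.eq]

theorem dvocMatrix_map_re {ϖ₀ : ℂ} (hϖ : ϖ₀.re = 0) (η φ : ℝ) (ςs : n → ℂ)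
    (Y : Matrix n n ℂ) {M : Matrix n n ℝ} (hM : ∀ i j, M i j = (exp (I * φ) * Y i j).re) :
    (dvocMatrix ϖ₀ η φ ςs Y).map (fun z => (z.re : ℂ)) =
      (η : ℂ) • (diagonal (fun k => ((exp (I * φ) * ςs k).re : ℂ)) - M.map ofReal) := by
  ext i j
  rcases eq_or_ne i j with rfl | hij
  · simp [dvocMatrix, hϖ, hM, mul_sub, mul_assoc]
  · simp [dvocMatrix, hij, hM, mul_assoc]
    ring

theorem dvocMatrix_add_conjTranspose {ϖ₀ : ℂ} (hϖ : ϖ₀.re = 0) (η φ : ℝ) (ςs : n → ℂ)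
    {Y : Matrix n n ℂ} (hY : Y.IsSymm) {M : Matrix n n ℝ}
    (hM : ∀ i j, M i j = (exp (I * φ) * Y i j).re) :
    dvocMatrix ϖ₀ η φ ςs Y + (dvocMatrix ϖ₀ η φ ςs Y)ᴴ =
      (2 : ℂ) • (η : ℂ) • (diagonal (fun k => ((exp (I * φ) * ςs k).re : ℂ)) - M.map ofReal) := by
  rw [(isSymm_dvocMatrix ϖ₀ η φ ςs hY).add_conjTranspose, dvocMatrix_map_re hϖ η φ ςs Y hM]

end DVOC

theorem parametric_synchronization_lyapunov_decrease_general {N : ℕ} (hN : 0 < N)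
    (ϖ₀ : ℂ) (hϖ : ϖ₀.re = 0) (η φ : ℝ) (hη : 0 < η)
    (ςs : Fin N → ℂ) (Y : Matrix (Fin N) (Fin N) ℂ) (hY : Y.IsSymm)
    (hY1 : Y.mulVec (fun _ => 1) = 0)
    (A : Matrix (Fin N) (Fin N) ℂ)
    (hA : A = ϖ₀ • (1 : Matrix (Fin N) (Fin N) ℂ) +
      ((η : ℂ) * Complex.exp (Complex.I * φ)) • (Matrix.diagonal ςs - Y))
    (φ₁ : Fin N → ℂ) (hφ : ∀ k, φ₁ k ≠ 0)
    (P : Matrix (Fin N) (Fin N) ℂ)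
    (hP : P = 1 - (star φ₁ ⬝ᵥ φ₁)⁻¹ •
      Matrix.of (fun i j => φ₁ i * (starRingEnd ℂ) (φ₁ j)))
    (M : Matrix (Fin N) (Fin N) ℝ)
    (hM : ∀ i j, M i j = (Complex.exp (Complex.I * φ) * Y i j).re)
    (lam2 : ℝ) (hlam2pos : 0 < lam2)
    (hlam2 : ∀ w : Fin N → ℂ, (∑ k, w k) = 0 →
      lam2 * (∑ k, ‖w k‖ ^ 2)
        ≤ (star w ⬝ᵥ (M.map Complex.ofReal).mulVec w).re)
    (δb γb : ℝ) (hδ : δb ∈ Set.Ico 0 (Real.pi / 2)) (hγ : γb ∈ Set.Ioo 0 1)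
    (harg : ∀ k l, |Complex.arg (φ₁ k) - Complex.arg (φ₁ l)| ≤ δb)
    (hamp : ∀ k l, |‖φ₁ k‖ / ‖φ₁ l‖ - 1| ≤ γb)
    (c : ℝ) (hc : c = (1 - γb) ^ 2 * (1 + Real.cos δb) / 2)
    (maxRe : ℝ)
    (hmax : maxRe = Finset.univ.sup' (Finset.univ_nonempty_iff.mpr ⟨⟨0, hN⟩⟩)
      fun k => (Complex.exp (Complex.I * φ) * ςs k).re)
    (hbound : maxRe < c * lam2)
    (v : Fin N → ℂ) (hv : P.mulVec v ≠ 0) :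
    ((1 / 2 : ℂ) * (star v ⬝ᵥ ((P * (A + A.conjTranspose) * P).mulVec v))).re
      = η * (star (P.mulVec v) ⬝ᵥ
          ((Matrix.diagonal (fun k => ((Complex.exp (Complex.I * φ) * ςs k).re : ℂ)) -
            M.map Complex.ofReal).mulVec (P.mulVec v))).re ∧
    ((1 / 2 : ℂ) * (star v ⬝ᵥ ((P * (A + A.conjTranspose) * P).mulVec v))).re
      ≤ η * (∑ k, ‖P.mulVec v k‖ ^ 2) * (maxRe - c * lam2) ∧
    ((1 / 2 : ℂ) * (star v ⬝ᵥ ((P * (A + A.conjTranspose) * P).mulVec v))).re < 0 := by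
  have : Nonempty (Fin N) := ⟨⟨0, hN⟩⟩
  set D : Matrix (Fin N) (Fin N) ℂ :=
    diagonal (fun k => ((exp (I * φ) * ςs k).re : ℂ)) - M.map ofReal
  set u := P *ᵥ v
  have hP' : P = projOff φ₁ := hP
  have hPH : P.IsHermitian := hP' ▸ isHermitian_projOff φ₁
  have horth : star φ₁ ⬝ᵥ u = 0 := by
    rw [dotProduct_mulVec, hP', star_vecMul_projOff, zero_dotProduct]
  have hV : ((1 / 2 : ℂ) * (star v ⬝ᵥ (P * (A + Aᴴ) * P) *ᵥ v)).re
      = η * (star u ⬝ᵥ D *ᵥ u).re := by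
    rw [hPH.star_dotProduct_mul_mul_mulVec, show A = dvocMatrix ϖ₀ η φ ςs Y from hA,
      dvocMatrix_add_conjTranspose hϖ η φ ςs hY hM, smul_mulVec, smul_mulVec, dotProduct_smul,
      dotProduct_smul, smul_eq_mul, smul_eq_mul, ← mul_assoc, one_div,
      inv_mul_cancel₀ two_ne_zero, one_mul, re_ofReal_mul]
  have hu : 0 < ∑ k, ‖u k‖ ^ 2 := sum_norm_sq_pos hv
  have hdiag := re_star_dotProduct_diagonal_mulVec_le
    (fun k => hmax ▸ Finset.le_sup' (fun k => (exp (I * φ) * ςs k).re) (Finset.mem_univ k)) u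
  have hcoh := coherence_mul_card_mul_sum_norm_sq_le_norm_sum_sq hφ hδ.1
    (by linarith [hδ.2, Real.pi_pos]) hγ.1.le hγ.2.le harg hamp
  have hmean := norm_sum_sq_le_of_star_dotProduct_eq_zero_of_coherent
    (Function.ne_iff.mpr ⟨⟨0, hN⟩, hφ _⟩) horth (hc ▸ hcoh)
  have hMsymm : (M.map ofReal).IsSymm :=
    (IsSymm.ext fun i j => by rw [hM, hM, hY.apply]).map ofReal
  have hlap := mul_sum_norm_sq_le_re_star_dotProduct_mulVec hMsymm
    (mulVec_one_map_ofReal_eq_zero hY1 _ hM) hlam2pos.le hlam2 hmean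
  have hle : ((1 / 2 : ℂ) * (star v ⬝ᵥ (P * (A + Aᴴ) * P) *ᵥ v)).re
      ≤ η * (∑ k, ‖u k‖ ^ 2) * (maxRe - c * lam2) := by
    rw [hV, sub_mulVec, dotProduct_sub, sub_re]
    nlinarith
  exact ⟨hV, hle, hle.trans_lt (mul_neg_of_pos_of_neg (mul_pos hη hu) (by linarith))⟩

/-- Parametric synchronization condition: for `A = ϖ₀I + ηe^{jφ}(diag(ς̄*) − Y)`, `P` the
projector off `span(φ₁)`, `M = Re(e^{jφ}Y)` a Laplacian with algebraic connectivity
`λ₂(M) > 0`, eigenvector entry bounds `δ̄, γ̄`, and `max_k Re(e^{jφ}ς̄*_k) < c λ₂(M)` with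
`c = (1−γ̄)²(1+cos δ̄)/2`, the Lyapunov derivative
`V̇ = η vᴴP[Re(e^{jφ}diag(ς̄*)) − M]Pv ≤ η‖Pv‖²(max_k Re(e^{jφ}ς̄*_k) − cλ₂(M)) < 0`
for all `v ∉ span(φ₁)`. -/
theorem parametric_synchronization_lyapunov_decrease {N : ℕ} (hN : 0 < N)
    (ϖ₀ : ℂ) (hϖ : ϖ₀.re = 0) (η φ : ℝ) (hη : 0 < η)
    (ςs : Fin N → ℂ) (Y : Matrix (Fin N) (Fin N) ℂ) (hY : Y.IsSymm)
    (hY1 : Y.mulVec (fun _ => 1) = 0)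
    (A : Matrix (Fin N) (Fin N) ℂ)
    (hA : A = ϖ₀ • (1 : Matrix (Fin N) (Fin N) ℂ) +
      ((η : ℂ) * Complex.exp (Complex.I * φ)) • (Matrix.diagonal ςs - Y))
    (lam1 : ℂ) (φ₁ : Fin N → ℂ) (heig : A.mulVec φ₁ = lam1 • φ₁) (hφ : ∀ k, φ₁ k ≠ 0)
    (P : Matrix (Fin N) (Fin N) ℂ)
    (hP : P = 1 - (star φ₁ ⬝ᵥ φ₁)⁻¹ •
      Matrix.of (fun i j => φ₁ i * (starRingEnd ℂ) (φ₁ j)))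
    (M : Matrix (Fin N) (Fin N) ℝ)
    (hM : ∀ i j, M i j = (Complex.exp (Complex.I * φ) * Y i j).re)
    (lam2 : ℝ) (hlam2pos : 0 < lam2)
    (hlam2 : ∀ w : Fin N → ℂ, (∑ k, w k) = 0 →
      lam2 * (∑ k, ‖w k‖ ^ 2)
        ≤ (star w ⬝ᵥ (M.map Complex.ofReal).mulVec w).re)
    (δb γb : ℝ) (hδ : δb ∈ Set.Ico 0 (Real.pi / 2)) (hγ : γb ∈ Set.Ioo 0 1)
    (harg : ∀ k l, |Complex.arg (φ₁ k) - Complex.arg (φ₁ l)| ≤ δb)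
    (hamp : ∀ k l, |‖φ₁ k‖ / ‖φ₁ l‖ - 1| ≤ γb)
    (c : ℝ) (hc : c = (1 - γb) ^ 2 * (1 + Real.cos δb) / 2)
    (maxRe : ℝ)
    (hmax : maxRe = Finset.univ.sup' (Finset.univ_nonempty_iff.mpr ⟨⟨0, hN⟩⟩)
      fun k => (Complex.exp (Complex.I * φ) * ςs k).re)
    (hbound : maxRe < c * lam2)
    (v : Fin N → ℂ) (hv : P.mulVec v ≠ 0) :
    ((1 / 2 : ℂ) * (star v ⬝ᵥ ((P * (A + A.conjTranspose) * P).mulVec v))).re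
      = η * (star (P.mulVec v) ⬝ᵥ
          ((Matrix.diagonal (fun k => ((Complex.exp (Complex.I * φ) * ςs k).re : ℂ)) -
            M.map Complex.ofReal).mulVec (P.mulVec v))).re ∧
    ((1 / 2 : ℂ) * (star v ⬝ᵥ ((P * (A + A.conjTranspose) * P).mulVec v))).re
      ≤ η * (∑ k, ‖P.mulVec v k‖ ^ 2) * (maxRe - c * lam2) ∧
    ((1 / 2 : ℂ) * (star v ⬝ᵥ ((P * (A + A.conjTranspose) * P).mulVec v))).re < 0 :=
  parametric_synchronization_lyapunov_decrease_general hN ϖ₀ hϖ η φ hη ςs Y hY hY1 A hA φ₁ hφ P hP M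
    hM lam2 hlam2pos hlam2 δb γb hδ hγ harg hamp c hc maxRe hmax hbound v hv
end

section
/- Let G', B' ∈ ℝ^{N×N} be symmetric Laplacian matrices (G'·1 = B'·1 = 0) with G' positive semidefinite of rank N−1 (null space spanned by 1), and let α > 0. Then the (2N+1)×2N real matrix A = [[G' + αI, −B'], [B', G'], [0ᵀ, 1ᵀ]] has rank 2N; moreover for any right-hand side b = (σ'* + αu*, ρ'* − (1/N)·1·1ᵀρ'*, 0) the system A x = b has a unique solution, since 1ᵀ applied to the middle block rows of [A, b] vanishes. -/
open Matrix Finset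

/-!
Write `L(u, δ) = ((G + αI)u − Bδ, Bu + Gδ, 1ᵀδ)`. If `L(u, δ) = 0`, pairing the first block
row with `u` and the second with `δ` cancels the `B` terms by symmetry, leaving
`uᵀGu + α‖u‖² + δᵀGδ = 0`; positivity forces `u = 0` and `Gδ = 0`, so `δ` is constant, and
`1ᵀδ = 0` makes it zero. Hence `L` is injective. Since `1ᵀG = 1ᵀB = 0`, the range of `L` lies in
the hyperplane where the middle block sums to zero, which has dimension `2N`, so the range is that
hyperplane; the right-hand side lies in it because `ρ − mean(ρ)·1` sums to zero.
-/

namespace Matrix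

variable {R n : Type*} [CommSemiring R] [Fintype n]

theorem sum_mulVec_eq_zero_of_isSymm {M : Matrix n n R} (hM : M.IsSymm)
    (h1 : M *ᵥ (fun _ => 1) = 0) (v : n → R) : ∑ i, (M *ᵥ v) i = 0 :=
  calc ∑ i, (M *ᵥ v) i = (fun _ => 1) ⬝ᵥ M *ᵥ v := by simp [dotProduct]
    _ = (Mᵀ *ᵥ fun _ => 1) ⬝ᵥ v := by rw [dotProduct_mulVec, mulVec_transpose]
    _ = 0 := by rw [hM.eq, h1, zero_dotProduct]

theorem IsSymm.dotProduct_mulVec_comm {M : Matrix n n R} (hM : M.IsSymm) (v w : n → R) :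
    v ⬝ᵥ M *ᵥ w = w ⬝ᵥ M *ᵥ v := by
  rw [dotProduct_mulVec, ← mulVec_transpose, hM.eq, dotProduct_comm]

end Matrix

theorem LinearMap.exists_eq_of_injective_of_sum_eq_zero {𝕜 E n : Type*} [Field 𝕜] [CharZero 𝕜]
    [AddCommGroup E] [Module 𝕜 E] [FiniteDimensional 𝕜 E] [Fintype n] [Nonempty n]
    {f : E × (n → 𝕜) →ₗ[𝕜] E × (n → 𝕜) × 𝕜} (hf : Function.Injective f)
    (hsum : ∀ p, ∑ i, (f p).2.1 i = 0) {x : E} {y : n → 𝕜} (hy : ∑ i, y i = 0) (s : 𝕜) :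
    ∃ p, f p = (x, y, s) := by
  -- Spreading the last coordinate over the middle block loses nothing on the hyperplane
  -- `∑ y = 0`, and turns `f` into an injective, hence surjective, endomorphism.
  let L : E × (n → 𝕜) × 𝕜 →ₗ[𝕜] E × (n → 𝕜) :=
    id.prodMap (fst 𝕜 (n → 𝕜) 𝕜 + (snd 𝕜 (n → 𝕜) 𝕜).smulRight fun _ => 1)
  have hL : ∀ v w : E × (n → 𝕜) × 𝕜,
      ∑ i, v.2.1 i = 0 → ∑ i, w.2.1 i = 0 → L v = L w → v = w := by
    rintro ⟨x, y, s⟩ ⟨x', y', s'⟩ hy hy' h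
    simp only [L, prodMap_apply, id_coe, id_eq, add_apply, fst_apply, smulRight_apply,
      snd_apply, Prod.mk.injEq] at h
    obtain ⟨rfl, h⟩ := h
    obtain rfl : s = s' := by
      simpa [sum_add_distrib, hy, hy'] using congrArg (fun v : n → 𝕜 => ∑ i, v i) h
    simpa using h
  obtain ⟨p, hp⟩ := injective_iff_surjective (f := L ∘ₗ f) |>.1
    (fun p q h => hf (hL _ _ (hsum p) (hsum q) h)) (L (x, y, s))
  exact ⟨p, hL _ _ (hsum p) hy hp⟩

section SlowSystem

variable {𝕜 n : Type*} [Field 𝕜] [Fintype n] (G B : Matrix n n 𝕜) (α : 𝕜)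

def slowSystem : (n → 𝕜) × (n → 𝕜) →ₗ[𝕜] (n → 𝕜) × (n → 𝕜) × 𝕜 where
  toFun p := (G *ᵥ p.1 + α • p.1 - B *ᵥ p.2, B *ᵥ p.1 + G *ᵥ p.2, ∑ k, p.2 k)
  map_add' p q := by
    simp only [Prod.fst_add, Prod.snd_add, mulVec_add, smul_add, Pi.add_apply, sum_add_distrib,
      Prod.mk_add_mk]
    congr 1 <;> abel_nf
  map_smul' c p := by
    simp only [Prod.smul_fst, Prod.smul_snd, mulVec_smul, smul_comm α c, Pi.smul_apply,
      smul_eq_mul, ← mul_sum, Prod.smul_mk, RingHom.id_apply, smul_add, smul_sub]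

theorem slowSystem_apply (p : (n → 𝕜) × (n → 𝕜)) :
    slowSystem G B α p = (G *ᵥ p.1 + α • p.1 - B *ᵥ p.2, B *ᵥ p.1 + G *ᵥ p.2, ∑ k, p.2 k) :=
  rfl

variable {G B}

theorem sum_slowSystem_snd_fst (hG : G.IsSymm) (hB : B.IsSymm) (hG1 : G *ᵥ (fun _ => 1) = 0)
    (hB1 : B *ᵥ (fun _ => 1) = 0) (p : (n → 𝕜) × (n → 𝕜)) :
    ∑ i, (slowSystem G B α p).2.1 i = 0 := by
  simp only [slowSystem_apply, Pi.add_apply, sum_add_distrib,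
    sum_mulVec_eq_zero_of_isSymm hG hG1, sum_mulVec_eq_zero_of_isSymm hB hB1, add_zero]

theorem slowSystem_injective [LinearOrder 𝕜] [IsStrictOrderedRing 𝕜] (hB : B.IsSymm)
    (hGpsd : ∀ w, 0 ≤ w ⬝ᵥ G *ᵥ w) (hGker : ∀ w, G *ᵥ w = 0 → ∃ c, w = fun _ => c)
    (hα : 0 < α) : Function.Injective (slowSystem G B α) := by
  refine (injective_iff_map_eq_zero _).2 fun ⟨u, δ⟩ h => ?_
  simp only [slowSystem_apply, Prod.mk_eq_zero] at h
  obtain ⟨h1, h2, h3⟩ := h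
  have energy : u ⬝ᵥ G *ᵥ u + α * (u ⬝ᵥ u) + δ ⬝ᵥ G *ᵥ δ = 0 := by
    have := congrArg₂ (· + ·) (congrArg (u ⬝ᵥ ·) h1) (congrArg (δ ⬝ᵥ ·) h2)
    simp only [dotProduct_add, dotProduct_sub, dotProduct_smul, smul_eq_mul, dotProduct_zero,
      hB.dotProduct_mulVec_comm u δ] at this
    linarith
  have hu : u = 0 := by
    have huu : 0 ≤ u ⬝ᵥ u := Fintype.sum_nonneg fun i => mul_self_nonneg (u i)
    exact dotProduct_self_eq_zero.1 (by nlinarith [hGpsd u, hGpsd δ])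
  obtain ⟨c, rfl⟩ : ∃ c, δ = fun _ => c := hGker δ (by simpa [hu] using h2)
  refine Prod.ext hu (funext fun i => ?_)
  have hn : (Fintype.card n : 𝕜) ≠ 0 := Nat.cast_ne_zero.2 (Fintype.card_pos_iff.2 ⟨i⟩).ne'
  simpa [hn] using h3

end SlowSystem

/-- Uniqueness of the slow-system equilibrium: with `G', B'` symmetric Laplacians, `G'` PSD
with null space `span(1)`, and `α > 0`, the linear map
`(u, δ) ↦ ((G' + αI)u − B'δ, B'u + G'δ, 1ᵀδ)` is injective (rank `2N`), and the equilibrium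
system with the center-of-angle right-hand side has a unique solution. -/
theorem slow_system_unique_equilibrium {N : ℕ} (hN : 0 < N)
    (G B : Matrix (Fin N) (Fin N) ℝ)
    (hGsym : G.IsSymm) (hBsym : B.IsSymm)
    (hG1 : G.mulVec (fun _ => 1) = 0) (hB1 : B.mulVec (fun _ => 1) = 0)
    (hGpsd : ∀ w : Fin N → ℝ, 0 ≤ w ⬝ᵥ G.mulVec w)
    (hker : ∀ w : Fin N → ℝ, G.mulVec w = 0 ↔ ∃ c : ℝ, w = fun _ => c)
    (α : ℝ) (hα : 0 < α) (σs ρs us : Fin N → ℝ) :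
    Function.Injective (fun p : (Fin N → ℝ) × (Fin N → ℝ) =>
      (G.mulVec p.1 + α • p.1 - B.mulVec p.2,
       B.mulVec p.1 + G.mulVec p.2,
       ∑ k, p.2 k)) ∧
    ∃! p : (Fin N → ℝ) × (Fin N → ℝ),
      G.mulVec p.1 + α • p.1 - B.mulVec p.2 = σs + α • us ∧
      B.mulVec p.1 + G.mulVec p.2 = ρs - (fun _ => (∑ k, ρs k) / N) ∧
      ∑ k, p.2 k = 0 := by
  have : Nonempty (Fin N) := ⟨⟨0, hN⟩⟩
  have hinj := slowSystem_injective α hBsym hGpsd (fun w => (hker w).1) hα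
  have hρ : ∑ i, (ρs - fun _ => (∑ k, ρs k) / N : Fin N → ℝ) i = 0 := by
    simp [sum_sub_distrib, mul_div_cancel₀, hN.ne']
  have hsolv := LinearMap.exists_eq_of_injective_of_sum_eq_zero hinj
    (sum_slowSystem_snd_fst α hGsym hBsym hG1 hB1) (x := σs + α • us) hρ 0
  exact ⟨hinj, by simpa only [slowSystem_apply, Prod.mk.injEq] using
    hinj.existsUnique_of_mem_range hsolv⟩
end

section
/- Consider the linear ODE system on ℝ^{3N}: ũ' = −ηG'ũ + ηB'δ̃ − ηα ũ_f, δ̃' = −ηB'ũ − ηG'δ̃, τ ũ_f' = ũ − ũ_f, with η, α, τ > 0, G' symmetric positive semidefinite with ker G' = span(1), B' symmetric with B'·1 = 0, and initial condition satisfying 1ᵀδ̃ = 0 (preserved by the flow). Then W(ũ, δ̃, ũ_f) = ½‖ũ‖² + ½‖δ̃‖² + ½ηατ‖ũ_f‖² satisfies Ẇ = −η ũᵀG'ũ − η δ̃ᵀG'δ̃ − ηα‖ũ_f‖² ≤ 0, and the largest invariant set where Ẇ = 0 is the origin; hence the origin is globally asymptotically stable. -/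
open Matrix Finset Filter Topology

/-!
Exponential stability through a strict Lyapunov function. Since `G'` and `B'` are symmetric and
annihilate `1`, the sums `Σũ`, `Σũ_f` evolve by the scalar system `(Σũ)' = -ηα Σũ_f`,
`τ (Σũ_f)' = Σũ - Σũ_f`, and `Σδ̃` is conserved, hence zero. The energy `W` dissipates
`ηũᵀG'ũ + ηδ̃ᵀG'δ̃ + ηα‖ũ_f‖²`, which controls every direction except the mean of `ũ`; tilting it to
`V = W - ε (Σũ)(Σũ_f)` adds a dissipation `ετ⁻¹(Σũ)²/2` for that mean at the cost of an
`O(ε)` term in `‖ũ_f‖²`. The positive definite form `wᵀG'w + (Σw)²` dominates `λ‖w‖²`, so for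
small `ε` we get `V̇ ≤ -κ (‖ũ‖² + ‖δ̃‖² + ‖ũ_f‖²)`, while `V` is comparable to that quantity;
Grönwall's inequality then gives exponential decay.
-/

theorem Matrix.dotProduct_self_nonneg {n : Type*} [Fintype n] (v : n → ℝ) : 0 ≤ v ⬝ᵥ v :=
  sum_nonneg fun i _ => mul_self_nonneg (v i)

theorem Matrix.dotProduct_self_eq_sum_sq {n R : Type*} [Fintype n] [CommSemiring R]
    (v : n → R) : v ⬝ᵥ v = ∑ i, v i ^ 2 := by
  simp [dotProduct, sq]

theorem Matrix.IsSymm.dotProduct_mulVec_comm_s14 {n R : Type*} [Fintype n] [CommSemiring R]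
    {M : Matrix n n R} (hM : M.IsSymm) (v w : n → R) :
    v ⬝ᵥ M *ᵥ w = w ⬝ᵥ M *ᵥ v := by
  rw [dotProduct_mulVec, ← mulVec_transpose, hM.eq, dotProduct_comm]

theorem Matrix.IsSymm.sum_mulVec_eq_zero {n R : Type*} [Fintype n] [CommSemiring R]
    {M : Matrix n n R} (hM : M.IsSymm) (h1 : M *ᵥ 1 = 0) (v : n → R) :
    ∑ i, (M *ᵥ v) i = 0 := by
  rw [← one_dotProduct, hM.dotProduct_mulVec_comm_s14, h1, dotProduct_zero]

theorem sq_sum_le_card_mul_dotProduct_self {n : Type*} [Fintype n] (v : n → ℝ) :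
    (∑ i, v i) ^ 2 ≤ Fintype.card n * (v ⬝ᵥ v) := by
  rw [dotProduct_self_eq_sum_sq]
  exact sq_sum_le_card_mul_sum_sq

theorem two_mul_abs_sum_mul_sum_le {n : Type*} [Fintype n] (u f : n → ℝ) :
    2 * |(∑ i, u i) * ∑ i, f i| ≤ Fintype.card n * (u ⬝ᵥ u + f ⬝ᵥ f) := by
  have := two_mul_le_add_sq |∑ i, u i| |∑ i, f i|
  rw [sq_abs, sq_abs, mul_assoc, ← abs_mul] at this
  linarith [sq_sum_le_card_mul_dotProduct_self u, sq_sum_le_card_mul_dotProduct_self f]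

theorem exists_pos_mul_le_of_sq_homogeneous {E : Type*} [NormedAddCommGroup E]
    [NormedSpace ℝ E] [ProperSpace E] {q r : E → ℝ} (hq : Continuous q) (hr : Continuous r)
    (hq₂ : ∀ (c : ℝ) x, q (c • x) = c ^ 2 * q x) (hr₂ : ∀ (c : ℝ) x, r (c • x) = c ^ 2 * r x)
    (hpos : ∀ x ≠ 0, 0 < q x) : ∃ lam > 0, ∀ x, lam * r x ≤ q x := by
  obtain ⟨m, hm, hqm⟩ := (isCompact_sphere (0 : E) 1).exists_forall_le' hq.continuousOn
    fun x hx => hpos x (ne_zero_of_mem_unit_sphere ⟨x, hx⟩)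
  obtain ⟨M, hrM⟩ := (isCompact_sphere (0 : E) 1).exists_bound_of_continuousOn hr.continuousOn
  refine ⟨m / (|M| + 1), by positivity, fun x => ?_⟩
  rcases eq_or_ne x 0 with rfl | hx
  · have hq0 : q 0 = 0 := by simpa using hq₂ 0 0
    have hr0 : r 0 = 0 := by simpa using hr₂ 0 0
    simp [hq0, hr0]
  set y := ‖x‖⁻¹ • x
  have hy : y ∈ Metric.sphere (0 : E) 1 := by simp [y, norm_smul, hx]
  have hry : r y ≤ |M| + 1 := by
    have := hrM y hy
    rw [Real.norm_eq_abs] at this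
    linarith [le_abs_self (r y), le_abs_self M]
  rw [← smul_inv_smul₀ (norm_ne_zero_iff.mpr hx) x, hq₂, hr₂]
  calc m / (|M| + 1) * (‖x‖ ^ 2 * r y) ≤ ‖x‖ ^ 2 * (m / (|M| + 1) * (|M| + 1)) := by
        rw [mul_left_comm]; gcongr
    _ = ‖x‖ ^ 2 * m := by field_simp
    _ ≤ ‖x‖ ^ 2 * q y := by gcongr; exact hqm y hy

theorem Matrix.PosSemidef.exists_pos_mul_dotProduct_self_le {n : Type*} [Fintype n]
    {G : Matrix n n ℝ} (hG : G.PosSemidef) (hker : ∀ w, G *ᵥ w = 0 → ∃ c : ℝ, w = fun _ => c) :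
    ∃ lam > 0, ∀ w : n → ℝ, lam * (w ⬝ᵥ w) ≤ w ⬝ᵥ G *ᵥ w + (∑ i, w i) ^ 2 := by
  refine exists_pos_mul_le_of_sq_homogeneous (by fun_prop) (by fun_prop) (fun c w => ?_)
    (fun c w => ?_) fun w hw => ?_
  · simp only [mulVec_smul, dotProduct_smul, smul_dotProduct, Pi.smul_apply, smul_eq_mul,
      ← mul_sum]
    ring
  · simp only [dotProduct_smul, smul_dotProduct, smul_eq_mul]
    ring
  by_contra! hle
  have hGw : 0 ≤ w ⬝ᵥ G *ᵥ w := by simpa using hG.dotProduct_mulVec_nonneg w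
  have hsq := sq_nonneg (∑ i, w i)
  have hsum : ∑ i, w i = 0 := pow_eq_zero_iff two_ne_zero |>.mp (le_antisymm (by linarith) hsq)
  obtain ⟨c, rfl⟩ := hker w <| (hG.dotProduct_mulVec_zero_iff w).mp <| by
    simpa using le_antisymm (by linarith) hGw
  obtain ⟨i, hi⟩ := Function.ne_iff.mp hw
  have : Nonempty n := ⟨i⟩
  simp_all

theorem le_mul_exp_of_hasDerivAt_le {V V' : ℝ → ℝ} {K : ℝ} (hV : ∀ t, HasDerivAt V (V' t) t)
    (hV' : ∀ t, V' t ≤ K * V t) {t : ℝ} (ht : 0 ≤ t) : V t ≤ V 0 * Real.exp (K * t) := by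
  simpa [gronwallBound_ε0] using le_gronwallBound_of_liminf_deriv_right_le (K := K) (ε := 0)
    (fun s _ => (hV s).continuousAt.continuousWithinAt)
    (fun s _ r hr => (hV s).hasDerivWithinAt.liminf_right_slope_le hr) le_rfl
    (fun s _ => by simpa using hV' s) t ⟨ht, le_rfl⟩

theorem tendsto_zero_of_lyapunov {V V' S : ℝ → ℝ} {c₁ c₂ κ : ℝ} (hc₁ : 0 < c₁) (hc₂ : 0 < c₂)
    (hκ : 0 < κ) (hS : ∀ t, 0 ≤ S t) (hV : ∀ t, HasDerivAt V (V' t) t)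
    (hlow : ∀ t, c₁ * S t ≤ V t) (hup : ∀ t, V t ≤ c₂ * S t) (hV' : ∀ t, V' t ≤ -κ * S t) :
    Tendsto S atTop (𝓝 0) := by
  have hdecay : ∀ t, V' t ≤ -(κ / c₂) * V t := fun t => by
    have := mul_le_mul_of_nonneg_left (hup t) (div_pos hκ hc₂).le
    rw [← mul_assoc, div_mul_cancel₀ _ hc₂.ne'] at this
    linarith [hV' t]
  have hexp : Tendsto (fun t => V 0 / c₁ * Real.exp (-(κ / c₂) * t)) atTop (𝓝 0) := by
    simpa using (Real.tendsto_exp_atBot.comp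
      (tendsto_id.const_mul_atTop_of_neg (neg_lt_zero.mpr (div_pos hκ hc₂)))).const_mul (V 0 / c₁)
  refine squeeze_zero' (.of_forall hS) ?_ hexp
  filter_upwards [eventually_ge_atTop 0] with t ht
  rw [div_mul_eq_mul_div, le_div_iff₀' hc₁]
  exact (hlow t).trans (le_mul_exp_of_hasDerivAt_le hV hdecay ht)

theorem tendsto_zero_of_tendsto_dotProduct_self {α n : Type*} [Fintype n] {x : α → n → ℝ}
    {l : Filter α} (h : Tendsto (fun t => x t ⬝ᵥ x t) l (𝓝 0)) : Tendsto x l (𝓝 0) := by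
  refine squeeze_zero_norm (fun t => (pi_norm_le_iff_of_nonneg (Real.sqrt_nonneg _)).mpr
    fun k => Real.abs_le_sqrt ?_) (by simpa using h.sqrt)
  rw [dotProduct_self_eq_sum_sq]
  exact single_le_sum (fun i _ => sq_nonneg (x t i)) (mem_univ k)

theorem eventually_mul_le (K : ℝ) {L : ℝ} (hL : 0 < L) : ∀ᶠ ε in 𝓝[>] (0 : ℝ), ε * K ≤ L :=
  nhdsWithin_le_nhds <| (continuous_mul_const K).tendsto' 0 0 (zero_mul K) |>.eventually
    (eventually_le_nhds hL)

theorem hasDerivAt_dotProduct {n : Type*} [Fintype n] {x y : ℝ → n → ℝ} {x' y' : n → ℝ} {t : ℝ}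
    (hx : ∀ k, HasDerivAt (fun s => x s k) (x' k) t)
    (hy : ∀ k, HasDerivAt (fun s => y s k) (y' k) t) :
    HasDerivAt (fun s => x s ⬝ᵥ y s) (x' ⬝ᵥ y t + x t ⬝ᵥ y') t := by
  simpa [dotProduct, sum_add_distrib] using
    HasDerivAt.fun_sum (u := univ) fun k _ => (hx k).mul (hy k)

theorem hasDerivAt_sum {n : Type*} [Fintype n] {x : ℝ → n → ℝ} {x' : n → ℝ} {t : ℝ}
    (hx : ∀ k, HasDerivAt (fun s => x s k) (x' k) t) :
    HasDerivAt (fun s => ∑ k, x s k) (∑ k, x' k) t :=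
  HasDerivAt.fun_sum fun k _ => hx k

section SlowErrorDynamics

variable {n : Type*} [Fintype n] {G B : Matrix n n ℝ} {η α τ ε : ℝ}

noncomputable def slowLyapunov (η α τ ε : ℝ) (u d f : n → ℝ) : ℝ :=
  u ⬝ᵥ u / 2 + d ⬝ᵥ d / 2 + η * α * τ * (f ⬝ᵥ f) / 2 - ε * ((∑ i, u i) * ∑ i, f i)

noncomputable def slowLyapunovDeriv (G : Matrix n n ℝ) (η α τ ε : ℝ) (u d f : n → ℝ) : ℝ :=
  -(η * (u ⬝ᵥ G *ᵥ u)) - η * (d ⬝ᵥ G *ᵥ d) - η * α * (f ⬝ᵥ f) -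
    ε * (-(η * α) * (∑ i, f i) ^ 2 + τ⁻¹ * (∑ i, u i) * (∑ i, u i - ∑ i, f i))

section State

variable (u d f : n → ℝ)

theorem slowLyapunov_ge (hε : 0 ≤ ε) (hε₁ : ε * Fintype.card n ≤ 1 / 2)
    (hε₂ : ε * Fintype.card n ≤ η * α * τ / 2) :
    min (1 / 4) (η * α * τ / 4) * (u ⬝ᵥ u + d ⬝ᵥ d + f ⬝ᵥ f) ≤ slowLyapunov η α τ ε u d f := by
  have hcross := mul_le_mul_of_nonneg_left (two_mul_abs_sum_mul_sum_le u f) hε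
  have habs := mul_le_mul_of_nonneg_left (le_abs_self ((∑ i, u i) * ∑ i, f i)) hε
  have hu := mul_le_mul_of_nonneg_right hε₁ (dotProduct_self_nonneg u)
  have hf := mul_le_mul_of_nonneg_right hε₂ (dotProduct_self_nonneg f)
  have hmu := mul_le_mul_of_nonneg_right (min_le_left (1 / 4 : ℝ) (η * α * τ / 4))
    (add_nonneg (dotProduct_self_nonneg u) (dotProduct_self_nonneg d))
  have hmf := mul_le_mul_of_nonneg_right (min_le_right (1 / 4 : ℝ) (η * α * τ / 4))
    (dotProduct_self_nonneg f)
  have hd := dotProduct_self_nonneg d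
  unfold slowLyapunov
  linarith

theorem slowLyapunov_le (hε : 0 ≤ ε) (hε₁ : ε * Fintype.card n ≤ 1) :
    slowLyapunov η α τ ε u d f ≤ max 1 (η * α * τ) * (u ⬝ᵥ u + d ⬝ᵥ d + f ⬝ᵥ f) := by
  have hcross := mul_le_mul_of_nonneg_left (two_mul_abs_sum_mul_sum_le u f) hε
  have habs := mul_le_mul_of_nonneg_left (neg_abs_le ((∑ i, u i) * ∑ i, f i)) hε
  have hu := mul_le_mul_of_nonneg_right hε₁ (dotProduct_self_nonneg u)
  have hf := mul_le_mul_of_nonneg_right hε₁ (dotProduct_self_nonneg f)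
  have hmu := mul_le_mul_of_nonneg_right (le_max_left 1 (η * α * τ))
    (add_nonneg (dotProduct_self_nonneg u) (dotProduct_self_nonneg d))
  have hmf := mul_le_mul_of_nonneg_right (le_max_left 1 (η * α * τ)) (dotProduct_self_nonneg f)
  have hmf' := mul_le_mul_of_nonneg_right (le_max_right 1 (η * α * τ)) (dotProduct_self_nonneg f)
  have hd := dotProduct_self_nonneg d
  unfold slowLyapunov
  linarith

theorem slowLyapunovDeriv_le {lam : ℝ} (hG : ∀ w, 0 ≤ w ⬝ᵥ G *ᵥ w)
    (hgap : ∀ w, lam * (w ⬝ᵥ w) ≤ w ⬝ᵥ G *ᵥ w + (∑ i, w i) ^ 2) (hd : ∑ i, d i = 0)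
    (hα : 0 ≤ α) (hτ : 0 < τ) (hε : 0 ≤ ε) (hετ : ε * (τ⁻¹ / 2) ≤ η)
    (hεf : ε * ((η * α + τ⁻¹) * Fintype.card n) ≤ η * α / 2) :
    slowLyapunovDeriv G η α τ ε u d f ≤
      -min (ε * (τ⁻¹ / 2) * lam) (min (η * lam) (η * α / 2)) * (u ⬝ᵥ u + d ⬝ᵥ d + f ⬝ᵥ f) := by
  set κ := min (ε * (τ⁻¹ / 2) * lam) (min (η * lam) (η * α / 2))
  have hk : 0 ≤ ε * (τ⁻¹ / 2) := by positivity
  have hη : 0 ≤ η := hk.trans hετ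
  have ha := dotProduct_self_nonneg u
  have hb := dotProduct_self_nonneg d
  have hc := dotProduct_self_nonneg f
  have hu : ε * (τ⁻¹ / 2) * (lam * (u ⬝ᵥ u)) ≤
      η * (u ⬝ᵥ G *ᵥ u) + ε * (τ⁻¹ / 2) * (∑ i, u i) ^ 2 := by
    linarith [mul_le_mul_of_nonneg_right hετ (hG u), mul_le_mul_of_nonneg_left (hgap u) hk]
  have hd : η * (lam * (d ⬝ᵥ d)) ≤ η * (d ⬝ᵥ G *ᵥ d) := by
    simpa [hd] using mul_le_mul_of_nonneg_left (hgap d) hη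
  have hf : ε * (η * α + τ⁻¹) * (∑ i, f i) ^ 2 ≤ η * α / 2 * (f ⬝ᵥ f) := by
    linarith [mul_le_mul_of_nonneg_left (sq_sum_le_card_mul_dotProduct_self f)
      (by positivity : 0 ≤ ε * (η * α + τ⁻¹)), mul_le_mul_of_nonneg_right hεf hc]
  have hcross := mul_le_mul_of_nonneg_left (two_mul_le_add_sq (∑ i, u i) (∑ i, f i))
    (by positivity : 0 ≤ ε * τ⁻¹)
  have hr := mul_le_mul_of_nonneg_left (sq_nonneg (∑ i, f i)) (by positivity : 0 ≤ ε * τ⁻¹)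
  have hκu := mul_le_mul_of_nonneg_right (min_le_left _ _ : κ ≤ _) ha
  have hκd := mul_le_mul_of_nonneg_right ((min_le_right _ _).trans (min_le_left _ _) : κ ≤ _) hb
  have hκf := mul_le_mul_of_nonneg_right ((min_le_right _ _).trans (min_le_right _ _) : κ ≤ _) hc
  unfold slowLyapunovDeriv
  linarith

end State

variable {u d f : ℝ → n → ℝ}

theorem hasDerivAt_slowEnergy (hBsym : B.IsSymm) (hτ : τ ≠ 0)
    (hu : ∀ t k, HasDerivAt (fun s => u s k)
      ((-(η • G *ᵥ u t) + η • B *ᵥ d t - (η * α) • f t) k) t)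
    (hd : ∀ t k, HasDerivAt (fun s => d s k) ((-(η • B *ᵥ u t) - η • G *ᵥ d t) k) t)
    (hf : ∀ t k, HasDerivAt (fun s => f s k) ((τ⁻¹ • (u t - f t)) k) t) (t : ℝ) :
    HasDerivAt (fun s => u s ⬝ᵥ u s / 2 + d s ⬝ᵥ d s / 2 + η * α * τ * (f s ⬝ᵥ f s) / 2)
      (-(η * (u t ⬝ᵥ G *ᵥ u t)) - η * (d t ⬝ᵥ G *ᵥ d t) - η * α * (f t ⬝ᵥ f t)) t := by
  refine ((((hasDerivAt_dotProduct (hu t) (hu t)).div_const 2).fun_add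
    ((hasDerivAt_dotProduct (hd t) (hd t)).div_const 2)).fun_add
    (((hasDerivAt_dotProduct (hf t) (hf t)).const_mul (η * α * τ)).div_const 2)).congr_deriv ?_
  simp only [add_dotProduct, sub_dotProduct, neg_dotProduct, smul_dotProduct, dotProduct_add,
    dotProduct_sub, dotProduct_neg, dotProduct_smul, smul_eq_mul]
  rw [dotProduct_comm (G *ᵥ u t), dotProduct_comm (G *ᵥ d t), dotProduct_comm (B *ᵥ d t),
    dotProduct_comm (B *ᵥ u t), dotProduct_comm (f t) (u t), hBsym.dotProduct_mulVec_comm_s14 (u t)]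
  field_simp
  ring

theorem sum_eq_sum_zero_of_hasDerivAt (hGsym : G.IsSymm) (hBsym : B.IsSymm)
    (hG1 : G *ᵥ 1 = 0) (hB1 : B *ᵥ 1 = 0)
    (hd : ∀ t k, HasDerivAt (fun s => d s k) ((-(η • B *ᵥ u t) - η • G *ᵥ d t) k) t) (t : ℝ) :
    ∑ k, d t k = ∑ k, d 0 k := by
  have h : ∀ t, HasDerivAt (fun s => ∑ k, d s k) 0 t := fun t => by
    convert hasDerivAt_sum (hd t) using 1
    simp [sum_sub_distrib, ← mul_sum, hGsym.sum_mulVec_eq_zero hG1,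
      hBsym.sum_mulVec_eq_zero hB1]
  exact is_const_of_deriv_eq_zero (fun s => (h s).differentiableAt) (fun s => (h s).deriv) t 0

theorem hasDerivAt_sum_mul_sum (hGsym : G.IsSymm) (hBsym : B.IsSymm)
    (hG1 : G *ᵥ 1 = 0) (hB1 : B *ᵥ 1 = 0)
    (hu : ∀ t k, HasDerivAt (fun s => u s k)
      ((-(η • G *ᵥ u t) + η • B *ᵥ d t - (η * α) • f t) k) t)
    (hf : ∀ t k, HasDerivAt (fun s => f s k) ((τ⁻¹ • (u t - f t)) k) t) (t : ℝ) :
    HasDerivAt (fun s => (∑ k, u s k) * ∑ k, f s k)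
      (-(η * α) * (∑ k, f t k) ^ 2 + τ⁻¹ * (∑ k, u t k) * (∑ k, u t k - ∑ k, f t k)) t := by
  refine ((hasDerivAt_sum (hu t)).fun_mul (hasDerivAt_sum (hf t))).congr_deriv ?_
  simp [sum_sub_distrib, sum_add_distrib, ← mul_sum, hGsym.sum_mulVec_eq_zero hG1,
    hBsym.sum_mulVec_eq_zero hB1]
  ring

theorem hasDerivAt_slowLyapunov (hGsym : G.IsSymm) (hBsym : B.IsSymm)
    (hG1 : G *ᵥ 1 = 0) (hB1 : B *ᵥ 1 = 0) (hτ : τ ≠ 0)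
    (hu : ∀ t k, HasDerivAt (fun s => u s k)
      ((-(η • G *ᵥ u t) + η • B *ᵥ d t - (η * α) • f t) k) t)
    (hd : ∀ t k, HasDerivAt (fun s => d s k) ((-(η • B *ᵥ u t) - η • G *ᵥ d t) k) t)
    (hf : ∀ t k, HasDerivAt (fun s => f s k) ((τ⁻¹ • (u t - f t)) k) t) (t : ℝ) :
    HasDerivAt (fun s => slowLyapunov η α τ ε (u s) (d s) (f s))
      (slowLyapunovDeriv G η α τ ε (u t) (d t) (f t)) t :=
  (hasDerivAt_slowEnergy hBsym hτ hu hd hf t).fun_sub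
    ((hasDerivAt_sum_mul_sum hGsym hBsym hG1 hB1 hu hf t).const_mul ε)

end SlowErrorDynamics

/-- Global asymptotic stability of the slow error dynamics: along solutions of
`ũ' = −ηG'ũ + ηB'δ̃ − ηαũ_f`, `δ̃' = −ηB'ũ − ηG'δ̃`, `τũ_f' = ũ − ũ_f` with `1ᵀδ̃(0) = 0`,
the Lyapunov function `W = ½‖ũ‖² + ½‖δ̃‖² + ½ηατ‖ũ_f‖²` satisfies
`Ẇ = −ηũᵀG'ũ − ηδ̃ᵀG'δ̃ − ηα‖ũ_f‖² ≤ 0`, and the state converges to the origin. -/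
theorem slow_error_dynamics_gas {N : ℕ}
    (G B : Matrix (Fin N) (Fin N) ℝ)
    (hGsym : G.IsSymm) (hBsym : B.IsSymm)
    (hGpsd : ∀ w : Fin N → ℝ, 0 ≤ w ⬝ᵥ G.mulVec w)
    (hker : ∀ w : Fin N → ℝ, G.mulVec w = 0 ↔ ∃ c : ℝ, w = fun _ => c)
    (hB1 : B.mulVec (fun _ => 1) = 0)
    (η α τ : ℝ) (hη : 0 < η) (hα : 0 < α) (hτ : 0 < τ)
    (u d f : ℝ → Fin N → ℝ)
    (hu : ∀ t k, HasDerivAt (fun s => u s k)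
      ((-(η • G.mulVec (u t)) + η • B.mulVec (d t) - (η * α) • f t) k) t)
    (hd : ∀ t k, HasDerivAt (fun s => d s k)
      ((-(η • B.mulVec (u t)) - η • G.mulVec (d t)) k) t)
    (hf : ∀ t k, HasDerivAt (fun s => f s k) ((τ⁻¹ • (u t - f t)) k) t)
    (hδ0 : ∑ k, d 0 k = 0) :
    (∀ t, HasDerivAt
        (fun s => (∑ k, (u s k) ^ 2) / 2 + (∑ k, (d s k) ^ 2) / 2 +
          η * α * τ * (∑ k, (f s k) ^ 2) / 2)
        (-(η * (u t ⬝ᵥ G.mulVec (u t))) - η * (d t ⬝ᵥ G.mulVec (d t)) -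
          η * α * (∑ k, (f t k) ^ 2)) t ∧
      -(η * (u t ⬝ᵥ G.mulVec (u t))) - η * (d t ⬝ᵥ G.mulVec (d t)) -
          η * α * (∑ k, (f t k) ^ 2) ≤ 0) ∧
    Tendsto u atTop (𝓝 0) ∧ Tendsto d atTop (𝓝 0) ∧ Tendsto f atTop (𝓝 0) := by
  have hG : G.PosSemidef :=
    .of_dotProduct_mulVec_nonneg (isHermitian_iff_isSymm.mpr hGsym) (by simpa using hGpsd)
  have hG1 : G *ᵥ 1 = 0 := (hker 1).mpr ⟨1, rfl⟩
  have hηατ : 0 < η * α * τ := by positivity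
  refine ⟨fun t => ⟨by simpa only [dotProduct_self_eq_sum_sq] using
    hasDerivAt_slowEnergy hBsym hτ.ne' hu hd hf t, ?_⟩, ?_⟩
  · linarith [mul_nonneg hη.le (hGpsd (u t)), mul_nonneg hη.le (hGpsd (d t)),
      mul_nonneg (mul_pos hη hα).le (sum_nonneg fun k (_ : k ∈ univ) => sq_nonneg (f t k))]
  obtain ⟨lam, hlam, hgap⟩ := hG.exists_pos_mul_dotProduct_self_le fun w => (hker w).mp
  obtain ⟨ε, hε : 0 < ε, hε₁, hε₂, hετ, hεf⟩ := (eventually_mem_nhdsWithin.and <|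
    (eventually_mul_le _ one_half_pos).and <| (eventually_mul_le _ (half_pos hηατ)).and <|
    (eventually_mul_le _ hη).and <| eventually_mul_le _ (half_pos (mul_pos hη hα))).exists
  have hS := tendsto_zero_of_lyapunov (by positivity) (by positivity) (by positivity)
    (fun t => by
      linarith [dotProduct_self_nonneg (u t), dotProduct_self_nonneg (d t),
        dotProduct_self_nonneg (f t)])
    (hasDerivAt_slowLyapunov hGsym hBsym hG1 hB1 hτ.ne' hu hd hf)
    (fun t => slowLyapunov_ge _ _ _ hε.le hε₁ hε₂)
    (fun t => slowLyapunov_le _ _ _ hε.le (by linarith))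
    (fun t => slowLyapunovDeriv_le _ _ _ hGpsd hgap
      ((sum_eq_sum_zero_of_hasDerivAt hGsym hBsym hG1 hB1 hd t).trans hδ0) hα.le hτ hε.le hετ hεf)
  refine ⟨?_, ?_, ?_⟩ <;> refine tendsto_zero_of_tendsto_dotProduct_self
    (squeeze_zero (fun t => dotProduct_self_nonneg _) (fun t => ?_) hS) <;>
    linarith [dotProduct_self_nonneg (u t), dotProduct_self_nonneg (d t),
      dotProduct_self_nonneg (f t)]
end

section
/- For the system ũ' = −ηG'ũ + ηB'δ̃ − ηαũ_f, δ̃' = −ηB'ũ − ηG'δ̃, τũ_f' = ũ − ũ_f (with hypotheses as above), the set {(ũ, δ̃, ũ_f) : G'ũ = 0, G'δ̃ = 0, ũ_f = 0, 1ᵀδ̃ = 0} intersected with its forward-invariant subset under the flow equals {0}. That is: if a solution stays for all time in {Ẇ = 0} = {ũ ∈ ker G', δ̃ ∈ ker G', ũ_f = 0} with 1ᵀδ̃(t) = 0, then ũ = δ̃ = ũ_f = 0. -/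
open Matrix Finset

/-! On the invariant set `ũ_f ≡ 0`, so its derivative `(ũ - ũ_f)/τ` vanishes and `ũ = 0`;
`δ̃` lies in `ker G' = span 1` and has zero sum, hence `δ̃ = 0`. -/

theorem HasDerivAt.eq_zero_of_eq_zero {𝕜 E : Type*} [NontriviallyNormedField 𝕜]
    [NormedAddCommGroup E] [NormedSpace 𝕜 E] {g : 𝕜 → E} {v : E} {t : 𝕜}
    (hg : HasDerivAt g v t) (h0 : g = 0) : v = 0 := by
  subst h0
  exact hg.unique (hasDerivAt_const t 0)

theorem eq_zero_of_eq_const_of_sum_eq_zero {ι M : Type*} [Fintype ι] [AddCommMonoid M]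
    [Module.IsTorsionFree ℕ M] {w : ι → M} {c : M} (hw : w = fun _ => c)
    (hsum : ∑ i, w i = 0) : w = 0 := by
  cases isEmpty_or_nonempty ι
  · exact Subsingleton.elim _ _
  · rw [hw, sum_const, smul_eq_zero] at hsum
    rw [hw, hsum.resolve_left Finset.univ_nonempty.card_ne_zero]
    rfl

theorem lasalle_invariant_set_is_origin_general {N : ℕ}
    (G : Matrix (Fin N) (Fin N) ℝ)
    (hker : ∀ w : Fin N → ℝ, G.mulVec w = 0 ↔ ∃ c : ℝ, w = fun _ => c)
    (τ : ℝ) (hτ : 0 < τ)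
    (u d f : ℝ → Fin N → ℝ)
    (hf : ∀ t k, HasDerivAt (fun s => f s k) ((τ⁻¹ • (u t - f t)) k) t)
    (hstay : ∀ t, G.mulVec (u t) = 0 ∧ G.mulVec (d t) = 0 ∧ f t = 0 ∧ ∑ k, d t k = 0) :
    ∀ t, u t = 0 ∧ d t = 0 ∧ f t = 0 := by
  intro t
  obtain ⟨-, hGd, hf0, hsum⟩ := hstay t
  have hf_zero : f = 0 := funext fun s => (hstay s).2.2.1
  have hu0 : u t = 0 := by
    have h := (hasDerivAt_pi.2 (hf t)).eq_zero_of_eq_zero hf_zero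
    rwa [hf0, sub_zero, smul_eq_zero_iff_right (inv_ne_zero hτ.ne')] at h
  obtain ⟨c, hc⟩ := (hker (d t)).1 hGd
  exact ⟨hu0, eq_zero_of_eq_const_of_sum_eq_zero hc hsum, hf0⟩

/-- LaSalle invariant-set computation: a solution of the slow error dynamics that remains in
`{G'ũ = 0, G'δ̃ = 0, ũ_f = 0}` with `1ᵀδ̃ = 0` for all time must be identically zero. -/
theorem lasalle_invariant_set_is_origin {N : ℕ}
    (G B : Matrix (Fin N) (Fin N) ℝ)
    (hGsym : G.IsSymm) (hBsym : B.IsSymm)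
    (hGpsd : ∀ w : Fin N → ℝ, 0 ≤ w ⬝ᵥ G.mulVec w)
    (hker : ∀ w : Fin N → ℝ, G.mulVec w = 0 ↔ ∃ c : ℝ, w = fun _ => c)
    (hB1 : B.mulVec (fun _ => 1) = 0)
    (η α τ : ℝ) (hη : 0 < η) (hα : 0 < α) (hτ : 0 < τ)
    (u d f : ℝ → Fin N → ℝ)
    (hu : ∀ t k, HasDerivAt (fun s => u s k)
      ((-(η • G.mulVec (u t)) + η • B.mulVec (d t) - (η * α) • f t) k) t)
    (hd : ∀ t k, HasDerivAt (fun s => d s k)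
      ((-(η • B.mulVec (u t)) - η • G.mulVec (d t)) k) t)
    (hf : ∀ t k, HasDerivAt (fun s => f s k) ((τ⁻¹ • (u t - f t)) k) t)
    (hstay : ∀ t, G.mulVec (u t) = 0 ∧ G.mulVec (d t) = 0 ∧ f t = 0 ∧ ∑ k, d t k = 0) :
    ∀ t, u t = 0 ∧ d t = 0 ∧ f t = 0 :=
  lasalle_invariant_set_is_origin_general G hker τ hτ u d f hf hstay
end
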